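/- arXiv:1610.08768 — 6 statements merged into one kernel-verified Lean document; each statement's English description precedes it below -/
import Mathlib

section
/- Let (Ω, ℱ, P) be a probability space, X : Ω → ℝ^m and Y : Ω → ℝ random variables, and δ : Ω → {0,1} a random indicator. Suppose E[δ | X, Y] = π(X) almost surely for some measurable function π : ℝ^m → [0,1] (the missing-at-random assumption), and suppose e = g(X,Y) for some measurable g : ℝ^m × ℝ → ℝ is a random variable independent of X. Then for every bounded measurable function h : ℝ → ℝ one has E[δ h(e)] = E[δ] · E[h(e)]. -/
open MeasureTheory ProbabilityTheory

/-! Write `f = h ∘ e`, a function of `(X, Y)`. Conditioning on `(X, Y)` and pulling `f` out,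
`E[δ f] = E[π(X) f]`; since `π(X)` is a function of `X` and `f` one of `e`, independence splits
this into `E[π(X)] E[f]`, and `E[π(X)] = E[δ]` by the tower property. -/

section CondExp

variable {Ω : Type*} {m m₀ : MeasurableSpace Ω} {μ : Measure Ω}

theorem integral_mul_eq_integral_condExp_mul (hm : m ≤ m₀) [SigmaFinite (μ.trim hm)]
    {δ f : Ω → ℝ} (hf : AEStronglyMeasurable[m] f μ) (hδf : Integrable (δ * f) μ)
    (hδ : Integrable δ μ) :
    ∫ ω, δ ω * f ω ∂μ = ∫ ω, μ[δ | m] ω * f ω ∂μ :=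
  (integral_condExp hm).symm.trans
    (integral_congr_ae (condExp_mul_of_aestronglyMeasurable_right hf hδf hδ))

theorem integral_mul_eq_mul_integral_of_condExp_indepFun (hm : m ≤ m₀)
    [SigmaFinite (μ.trim hm)] {δ f p : Ω → ℝ} (hf : AEStronglyMeasurable[m] f μ)
    (hδf : Integrable (δ * f) μ) (hδ : Integrable δ μ) (hp : μ[δ | m] =ᵐ[μ] p)
    (hpf : IndepFun p f μ) :
    ∫ ω, δ ω * f ω ∂μ = (∫ ω, δ ω ∂μ) * ∫ ω, f ω ∂μ := by
  have hp_meas : AEStronglyMeasurable p μ :=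
    (stronglyMeasurable_condExp.aestronglyMeasurable.mono hm).congr hp
  calc ∫ ω, δ ω * f ω ∂μ = ∫ ω, μ[δ | m] ω * f ω ∂μ :=
        integral_mul_eq_integral_condExp_mul hm hf hδf hδ
    _ = ∫ ω, p ω * f ω ∂μ := integral_congr_ae (hp.mul .rfl)
    _ = (∫ ω, p ω ∂μ) * ∫ ω, f ω ∂μ :=
        hpf.integral_fun_mul_eq_mul_integral hp_meas (hf.mono hm)
    _ = (∫ ω, δ ω ∂μ) * ∫ ω, f ω ∂μ := by
        rw [← integral_congr_ae hp, integral_condExp hm]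

end CondExp

theorem expectation_delta_mul_of_MAR_general
    {Ω : Type*} [MeasurableSpace Ω] (P : Measure Ω) [IsProbabilityMeasure P]
    {m : ℕ} (X : Ω → (Fin m → ℝ)) (Y : Ω → ℝ) (δ : Ω → ℝ)
    (hX : Measurable X) (hY : Measurable Y) (hδ : Measurable δ)
    (hδ01 : ∀ ω, δ ω = 0 ∨ δ ω = 1)
    (π : (Fin m → ℝ) → ℝ) (hπ : Measurable π)
    (hMAR : P[δ | MeasurableSpace.comap (fun ω => (X ω, Y ω)) inferInstance]
      =ᵐ[P] fun ω => π (X ω))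
    (g : (Fin m → ℝ) × ℝ → ℝ) (hg : Measurable g)
    (e : Ω → ℝ) (he : ∀ ω, e ω = g (X ω, Y ω))
    (hindep : IndepFun e X P)
    (h : ℝ → ℝ) (hh : Measurable h) (hbd : ∃ C, ∀ x, |h x| ≤ C) :
    ∫ ω, δ ω * h (e ω) ∂P = (∫ ω, δ ω ∂P) * ∫ ω, h (e ω) ∂P := by
  obtain ⟨C, hC⟩ := hbd
  obtain rfl : e = fun ω => g (X ω, Y ω) := funext he
  have hmXY := (hX.prodMk hY).comap_le
  have hf : AEStronglyMeasurable[MeasurableSpace.comap (fun ω => (X ω, Y ω)) inferInstance]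
      (fun ω => h (g (X ω, Y ω))) P :=
    ((hh.comp hg).comp (comap_measurable _)).aestronglyMeasurable
  have hδ_int : Integrable δ P :=
    .of_bound hδ.aestronglyMeasurable 1 <| ae_of_all _ fun ω => by
      rcases hδ01 ω with h0 | h1 <;> simp [*]
  exact integral_mul_eq_mul_integral_of_condExp_indepFun hmXY hf
    (hδ_int.mul_bdd (hf.mono hmXY) (ae_of_all _ fun ω => hC _)) hδ_int hMAR
    (hindep.comp hh hπ).symm

/-- Under the missing-at-random assumption `E[δ | X, Y] = π(X)` a.s. and independence of the
error `e = g(X, Y)` from the covariate `X`, for every bounded measurable `h : ℝ → ℝ` one has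
`E[δ h(e)] = E[δ] ⬝ E[h(e)]`. -/
theorem expectation_delta_mul_of_MAR
    {Ω : Type*} [MeasurableSpace Ω] (P : Measure Ω) [IsProbabilityMeasure P]
    {m : ℕ} (X : Ω → (Fin m → ℝ)) (Y : Ω → ℝ) (δ : Ω → ℝ)
    (hX : Measurable X) (hY : Measurable Y) (hδ : Measurable δ)
    (hδ01 : ∀ ω, δ ω = 0 ∨ δ ω = 1)
    (π : (Fin m → ℝ) → ℝ) (hπ : Measurable π)
    (hπ01 : ∀ x, π x ∈ Set.Icc (0 : ℝ) 1)
    (hMAR : P[δ | MeasurableSpace.comap (fun ω => (X ω, Y ω)) inferInstance]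
      =ᵐ[P] fun ω => π (X ω))
    (g : (Fin m → ℝ) × ℝ → ℝ) (hg : Measurable g)
    (e : Ω → ℝ) (he : ∀ ω, e ω = g (X ω, Y ω))
    (hindep : IndepFun e X P)
    (h : ℝ → ℝ) (hh : Measurable h) (hbd : ∃ C, ∀ x, |h x| ≤ C) :
    ∫ ω, δ ω * h (e ω) ∂P = (∫ ω, δ ω ∂P) * ∫ ω, h (e ω) ∂P :=
  expectation_delta_mul_of_MAR_general P X Y δ hX hY hδ hδ01 π hπ hMAR g hg e he hindep h hh hbd
end

section
/- Let (Ω, ℱ, P) be a probability space, X : Ω → ℝ^m and Y : Ω → ℝ random variables, and δ : Ω → {0,1} a random indicator. Suppose E[δ | X, Y] = π(X) almost surely for some measurable function π : ℝ^m → [0,1] (the missing-at-random assumption), and suppose e = g(X,Y) for some measurable g : ℝ^m × ℝ → ℝ is a random variable independent of X. Then for every bounded measurable function h : ℝ → ℝ one has E[δ h(e) | X] = π(X) · E[h(e)] almost surely. -/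
open MeasureTheory ProbabilityTheory

/-!
Condition first on `(X, Y)`: there `h(e)` is known, since `e = g(X, Y)`, so it pulls out and
`δ` may be replaced by `E[δ | X, Y] = π(X)`. Conditioning the result on `X` pulls out `π(X)`,
and what remains, `E[h(e) | X]`, is the constant `E[h(e)]` because `e` is independent of `X`.
-/

section

variable {Ω : Type*} {m m' mΩ : MeasurableSpace Ω} {μ : Measure[mΩ] Ω}

theorem condExp_mul_ae_eq_condExp_condExp_mul (hm : m ≤ m') (hm' : m' ≤ mΩ)
    [SigmaFinite (μ.trim hm')] {f g : Ω → ℝ} (hf : StronglyMeasurable[m'] f)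
    (hg : Integrable g μ) (hgf : Integrable (g * f) μ) :
    μ[g * f | m] =ᵐ[μ] μ[μ[g | m'] * f | m] :=
  calc μ[g * f | m] =ᵐ[μ] μ[μ[g * f | m'] | m] := (condExp_condExp_of_le hm hm').symm
    _ =ᵐ[μ] μ[μ[g | m'] * f | m] :=
      condExp_congr_ae (condExp_mul_of_stronglyMeasurable_right hf hgf hg)

theorem ProbabilityTheory.IndepFun.condExp_comp_ae_eq_integral {β γ E : Type*}
    [MeasurableSpace β] [MeasurableSpace γ] [NormedAddCommGroup E] [NormedSpace ℝ E]
    [CompleteSpace E] [IsFiniteMeasure μ] {e : Ω → β} {X : Ω → γ}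
    (hindep : IndepFun e X μ) (he : Measurable e) (hX : Measurable X) {h : β → E}
    (hh : StronglyMeasurable h) :
    μ[fun ω => h (e ω) | MeasurableSpace.comap X inferInstance]
      =ᵐ[μ] fun _ => ∫ ω, h (e ω) ∂μ :=
  condExp_indep_eq he.comap_le hX.comap_le (hh.comp_measurable (comap_measurable e)) hindep

end

theorem condExp_delta_mul_of_MAR_general
    {Ω : Type*} [MeasurableSpace Ω] (P : Measure Ω) [IsProbabilityMeasure P]
    {m : ℕ} (X : Ω → (Fin m → ℝ)) (Y : Ω → ℝ) (δ : Ω → ℝ)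
    (hX : Measurable X) (hY : Measurable Y) (hδ : Measurable δ)
    (hδ01 : ∀ ω, δ ω = 0 ∨ δ ω = 1)
    (π : (Fin m → ℝ) → ℝ) (hπ : Measurable π)
    (hMAR : P[δ | MeasurableSpace.comap (fun ω => (X ω, Y ω)) inferInstance]
      =ᵐ[P] fun ω => π (X ω))
    (g : (Fin m → ℝ) × ℝ → ℝ) (hg : Measurable g)
    (e : Ω → ℝ) (he : ∀ ω, e ω = g (X ω, Y ω))
    (hindep : IndepFun e X P)
    (h : ℝ → ℝ) (hh : Measurable h) (hbd : ∃ C, ∀ x, |h x| ≤ C) :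
    P[fun ω => δ ω * h (e ω) | MeasurableSpace.comap X inferInstance]
      =ᵐ[P] fun ω => π (X ω) * ∫ ω', h (e ω') ∂P := by
  obtain ⟨C, hC⟩ := hbd
  have hXY_le := (hX.prodMk hY).comap_le
  have he_XY : Measurable[MeasurableSpace.comap (fun ω => (X ω, Y ω)) inferInstance] e := by
    rw [funext he]; exact hg.comp (comap_measurable (fun ω => (X ω, Y ω)))
  have he_meas : Measurable e := he_XY.mono hXY_le le_rfl
  have hhe_bdd : ∀ᵐ ω ∂P, ‖h (e ω)‖ ≤ C := ae_of_all _ fun ω => hC (e ω)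
  have hhe_int : Integrable (fun ω => h (e ω)) P :=
    .of_bound (hh.comp he_meas).aestronglyMeasurable C hhe_bdd
  have hδ_int : Integrable δ P := .of_bound hδ.aestronglyMeasurable 1 <| ae_of_all _ fun ω => by
    rcases hδ01 ω with hω | hω <;> simp [hω]
  -- From here on `mXY` shadows the ambient σ-algebra in instance search.
  set mX : MeasurableSpace Ω := MeasurableSpace.comap X inferInstance
  set mXY : MeasurableSpace Ω := MeasurableSpace.comap (fun ω => (X ω, Y ω)) inferInstance
  have hXY : mX ≤ mXY :=
    Measurable.comap_le (f := X) (measurable_fst.comp (comap_measurable (fun ω => (X ω, Y ω))))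
  calc P[fun ω => δ ω * h (e ω) | mX]
      =ᵐ[P] P[P[δ | mXY] * fun ω => h (e ω) | mX] :=
        condExp_mul_ae_eq_condExp_condExp_mul hXY hXY_le
          (hh.comp he_XY).stronglyMeasurable hδ_int (hδ_int.mul_bdd hhe_int.1 hhe_bdd)
    _ =ᵐ[P] P[fun ω => π (X ω) * h (e ω) | mX] := condExp_congr_ae (hMAR.mul .rfl)
    _ =ᵐ[P] fun ω => π (X ω) * P[fun ω => h (e ω) | mX] ω :=
        condExp_mul_of_stronglyMeasurable_left (hπ.comp (comap_measurable X)).stronglyMeasurable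
          ((integrable_condExp.congr hMAR).mul_bdd hhe_int.1 hhe_bdd) hhe_int
    _ =ᵐ[P] fun ω => π (X ω) * ∫ ω', h (e ω') ∂P :=
        Filter.EventuallyEq.rfl.mul
          (hindep.condExp_comp_ae_eq_integral he_meas hX hh.stronglyMeasurable)

/-- Under the missing-at-random assumption `E[δ | X, Y] = π(X)` a.s. and independence of the
error `e = g(X, Y)` from the covariate `X`, for every bounded measurable `h : ℝ → ℝ` one has
`E[δ h(e) | X] = π(X) ⬝ E[h(e)]` almost surely. -/
theorem condExp_delta_mul_of_MAR
    {Ω : Type*} [MeasurableSpace Ω] (P : Measure Ω) [IsProbabilityMeasure P]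
    {m : ℕ} (X : Ω → (Fin m → ℝ)) (Y : Ω → ℝ) (δ : Ω → ℝ)
    (hX : Measurable X) (hY : Measurable Y) (hδ : Measurable δ)
    (hδ01 : ∀ ω, δ ω = 0 ∨ δ ω = 1)
    (π : (Fin m → ℝ) → ℝ) (hπ : Measurable π)
    (hπ01 : ∀ x, π x ∈ Set.Icc (0 : ℝ) 1)
    (hMAR : P[δ | MeasurableSpace.comap (fun ω => (X ω, Y ω)) inferInstance]
      =ᵐ[P] fun ω => π (X ω))
    (g : (Fin m → ℝ) × ℝ → ℝ) (hg : Measurable g)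
    (e : Ω → ℝ) (he : ∀ ω, e ω = g (X ω, Y ω))
    (hindep : IndepFun e X P)
    (h : ℝ → ℝ) (hh : Measurable h) (hbd : ∃ C, ∀ x, |h x| ≤ C) :
    P[fun ω => δ ω * h (e ω) | MeasurableSpace.comap X inferInstance]
      =ᵐ[P] fun ω => π (X ω) * ∫ ω', h (e ω') ∂P :=
  condExp_delta_mul_of_MAR_general P X Y δ hX hY hδ hδ01 π hπ hMAR g hg e he hindep h hh hbd
end

section
/- Let e be a real random variable with E[e] = 0, E[e²] = 1, E[e⁴] < ∞, and suppose Δ := E[e⁴] − (E[e³])² − 1 ≠ 0. Let h : ℝ → ℝ be measurable with E[h(e)²] < ∞, write μ₃ = E[e³], and define h₀(z) = h(z) − E[h(e)] − z E[e h(e)] − ((z² − μ₃ z − 1)/Δ)·(E[e² h(e)] − μ₃ E[e h(e)] − E[h(e)]). Then E[h₀(e)] = 0, E[e h₀(e)] = 0 and E[e² h₀(e)] = 0; that is, h₀ belongs to the tangent set 𝒮. -/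
/-!
Writing `A = E[h(e)]`, `B = E[e h(e)]` and `k = (E[e² h(e)] − μ₃ B − A) / Δ`, the function `h₀`
is `h` minus the quadratic `(A − k) + (B − k μ₃) z + k z²`, so `E[eʲ h₀(e)]` is `E[eʲ h(e)]` minus
a combination of the moments `mⱼ, mⱼ₊₁, mⱼ₊₂`. With `m₀ = m₂ = 1`, `m₁ = 0`, `m₃ = μ₃` and
`m₄ = Δ + μ₃² + 1` the three conditions collapse to `k Δ = E[e² h(e)] − μ₃ B − A`.
The integrability of `eʲ h(e)` for `j ≤ 2` is Cauchy–Schwarz, since `eʲ` and `h(e)` lie in `L²`.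
-/

open MeasureTheory ProbabilityTheory

section

variable {Ω : Type*} [MeasurableSpace Ω] {μ : Measure Ω} {X Y : Ω → ℝ}

theorem integrable_pow_of_le_of_even [IsFiniteMeasure μ] (hX : AEStronglyMeasurable X μ)
    {m n : ℕ} (hmn : m ≤ n) (hn : Even n) (hint : Integrable (fun ω => X ω ^ n) μ) :
    Integrable (fun ω => X ω ^ m) μ := by
  have hnorm_n : Integrable (fun ω => ‖X ω‖ ^ n) μ := by
    simpa only [Real.norm_eq_abs, hn.pow_abs] using hint
  refine (integrable_norm_iff (hX.pow m)).1 ?_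
  simpa only [Pi.pow_apply, norm_pow] using integrable_norm_pow_of_le hX hmn hnorm_n

theorem integrable_pow_mul_of_even [IsFiniteMeasure μ] (hX : AEStronglyMeasurable X μ)
    (hY : AEStronglyMeasurable Y μ) {j n : ℕ} (hjn : 2 * j ≤ n) (hn : Even n)
    (hXn : Integrable (fun ω => X ω ^ n) μ) (hY2 : Integrable (fun ω => Y ω ^ 2) μ) :
    Integrable (fun ω => X ω ^ j * Y ω) μ := by
  have hXj : MemLp (fun ω => X ω ^ j) 2 μ := by
    refine (memLp_two_iff_integrable_sq (hX.pow j)).2 ?_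
    simpa only [Pi.pow_apply, ← pow_mul, mul_comm j 2] using
      integrable_pow_of_le_of_even hX hjn hn hXn
  exact hXj.integrable_mul ((memLp_two_iff_integrable_sq hY).2 hY2)

theorem integral_pow_mul_sub_quadratic {j : ℕ} (hY : Integrable (fun ω => X ω ^ j * Y ω) μ)
    (h₀ : Integrable (fun ω => X ω ^ j) μ) (h₁ : Integrable (fun ω => X ω ^ (j + 1)) μ)
    (h₂ : Integrable (fun ω => X ω ^ (j + 2)) μ) (a b c : ℝ) :
    ∫ ω, X ω ^ j * (Y ω - (a + b * X ω + c * X ω ^ 2)) ∂μ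
      = ∫ ω, X ω ^ j * Y ω ∂μ
        - (a * moment X j μ + b * moment X (j + 1) μ + c * moment X (j + 2) μ) := by
  have hexpand : (fun ω => X ω ^ j * (Y ω - (a + b * X ω + c * X ω ^ 2)))
      = fun ω => X ω ^ j * Y ω
        - (a * X ω ^ j + b * X ω ^ (j + 1) + c * X ω ^ (j + 2)) := by
    funext ω; ring
  rw [hexpand, integral_sub hY (by fun_prop), integral_add (by fun_prop) (by fun_prop),
    integral_add (by fun_prop) (by fun_prop)]
  simp only [integral_const_mul, moment, Pi.pow_apply]

end

/-- For `e` with `E[e] = 0`, `E[e²] = 1`, `E[e⁴] < ∞` and `Δ = E[e⁴] − (E[e³])² − 1 ≠ 0`, and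
`h` with `E[h(e)²] < ∞`, the projection
`h₀(z) = h(z) − E[h(e)] − z E[e h(e)] − ((z² − μ₃ z − 1)/Δ)(E[e² h(e)] − μ₃ E[e h(e)] − E[h(e)])`
satisfies `E[h₀(e)] = 0`, `E[e h₀(e)] = 0` and `E[e² h₀(e)] = 0`, i.e. `h₀ ∈ 𝒮`. -/
theorem projection_mem_tangent_set
    {Ω : Type*} [MeasurableSpace Ω] (P : Measure Ω) [IsProbabilityMeasure P]
    (e : Ω → ℝ) (he : Measurable e)
    (h4 : Integrable (fun ω => (e ω) ^ 4) P)
    (hmean : ∫ ω, e ω ∂P = 0) (hvar : ∫ ω, (e ω) ^ 2 ∂P = 1)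
    (μ₃ Δ : ℝ) (hμ₃ : μ₃ = ∫ ω, (e ω) ^ 3 ∂P)
    (hΔ : Δ = (∫ ω, (e ω) ^ 4 ∂P) - μ₃ ^ 2 - 1) (hΔ0 : Δ ≠ 0)
    (h : ℝ → ℝ) (hh : Measurable h)
    (hh2 : Integrable (fun ω => (h (e ω)) ^ 2) P)
    (h₀ : ℝ → ℝ)
    (hh₀ : ∀ z, h₀ z = h z - (∫ ω, h (e ω) ∂P) - z * (∫ ω, e ω * h (e ω) ∂P)
      - ((z ^ 2 - μ₃ * z - 1) / Δ) *
        ((∫ ω, (e ω) ^ 2 * h (e ω) ∂P) - μ₃ * (∫ ω, e ω * h (e ω) ∂P) - (∫ ω, h (e ω) ∂P))) :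
    (∫ ω, h₀ (e ω) ∂P = 0) ∧ (∫ ω, e ω * h₀ (e ω) ∂P = 0) ∧
    (∫ ω, (e ω) ^ 2 * h₀ (e ω) ∂P = 0) := by
  set A := ∫ ω, h (e ω) ∂P with hA
  set B := ∫ ω, e ω * h (e ω) ∂P with hB
  set C := ∫ ω, (e ω) ^ 2 * h (e ω) ∂P with hC
  set k := (C - μ₃ * B - A) / Δ with hk
  have hquad : ∀ z, h₀ z = h z - ((A - k) + (B - k * μ₃) * z + k * z ^ 2) := by
    intro z; rw [hh₀, hk]; ring
  have hkΔ : k * Δ = C - μ₃ * B - A := div_mul_cancel₀ _ hΔ0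
  clear_value A B C k
  have hpow : ∀ i ≤ 4, Integrable (fun ω => e ω ^ i) P := fun i hi =>
    integrable_pow_of_le_of_even he.aestronglyMeasurable hi (by decide) h4
  have hmoment : ∀ j ≤ 2, ∫ ω, e ω ^ j * h₀ (e ω) ∂P = ∫ ω, e ω ^ j * h (e ω) ∂P
      - ((A - k) * moment e j P + (B - k * μ₃) * moment e (j + 1) P
        + k * moment e (j + 2) P) := fun j hj => by
    simp_rw [hquad]
    exact integral_pow_mul_sub_quadratic
      (integrable_pow_mul_of_even he.aestronglyMeasurable (hh.comp he).aestronglyMeasurable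
        (by omega) (by decide) h4 hh2)
      (hpow j (by omega)) (hpow (j + 1) (by omega)) (hpow (j + 2) (by omega)) _ _ _
  have hm0 : moment e 0 P = 1 := by simp [moment]
  have hm1 : moment e 1 P = 0 := (moment_one e P).trans hmean
  have hm2 : moment e 2 P = 1 := hvar
  have hm3 : moment e 3 P = μ₃ := hμ₃.symm
  have hm4 : moment e 4 P = Δ + μ₃ ^ 2 + 1 := by rw [hΔ]; simp only [moment, Pi.pow_apply]; ring
  refine ⟨?_, ?_, ?_⟩
  · simpa [hm0, hm1, hm2, ← hA] using hmoment 0 (by norm_num)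
  · simpa [hm1, hm2, hm3, ← hB] using hmoment 1 (by norm_num)
  · rw [hmoment 2 le_rfl, ← hC, hm2, hm3, hm4]
    linear_combination -hkΔ
end

section
/- Let f : ℝ → (0,∞) be a probability density, absolutely continuous with almost-everywhere derivative f′, with finite Fisher information for location and scale ∫(1+z²)(f′/f)² f < ∞, and let e have density f with E[e] = 0, E[e²] = 1, E[e⁴] < ∞ and Δ := E[e⁴] − (E[e³])² − 1 > 0. Write μ₃ = E[e³], ℓ(z) = (−f′(z)/f(z), −1 − z f′(z)/f(z))ᵀ ∈ ℝ², e₁ = (1,0)ᵀ, e₂ = (0,1)ᵀ, and define ℓ₀(z) = ℓ(z) − z e₁ − ((z² − μ₃ z − 1)/Δ)·(2 e₂ − μ₃ e₁). Then E[ℓ₀(e)] = 0, E[e ℓ₀(e)] = 0 and E[e² ℓ₀(e)] = 0 (componentwise in ℝ²); that is, each component of ℓ₀ lies in the tangent set 𝒮. -/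
/-!
Expanding `ℓ₀`, the six scalar identities become linear relations between the moments `∫ zᵏ f`
(`k ≤ 4`) and the score moments `∫ zᵏ f'` (`k ≤ 3`). The score moments are integrable because
`|zᵏ f'| = |z|ᵏ |f'/f| f` is dominated, by the AM-GM inequality, by the Fisher integrand plus
`(1 + z⁴) f`. Since `f` is absolutely continuous, integration by parts gives
`∫ zᵏ f' = -k ∫ zᵏ⁻¹ f`, the boundary terms vanishing because `zᵏ f` is integrable; hence
`E[eʲ ℓ(e)] = (j E[eʲ⁻¹], j E[eʲ])`. With `E[e] = 0`, `E[e²] = 1`, `E[e³] = μ₃` and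
`E[e⁴] = Δ + μ₃² + 1` the relations hold identically.
-/

open MeasureTheory intervalIntegral
open Set Filter Topology

lemma abs_pow_le_one_add_abs_pow (z : ℝ) {k n : ℕ} (hkn : k ≤ n) : |z| ^ k ≤ 1 + |z| ^ n := by
  rcases le_total |z| 1 with h | h
  · linarith [pow_le_one₀ (n := k) (abs_nonneg z) h, pow_nonneg (abs_nonneg z) n]
  · linarith [pow_le_pow_right₀ h hkn]

lemma MeasureTheory.Integrable.pow_mul_of_le {μ : Measure ℝ} {f : ℝ → ℝ} (hf : Integrable f μ)
    {n : ℕ} (hfn : Integrable (fun z => z ^ n * f z) μ) {k : ℕ} (hkn : k ≤ n) :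
    Integrable (fun z => z ^ k * f z) μ := by
  refine (hf.norm.add hfn.norm).mono' ((continuous_pow k).aestronglyMeasurable.mul
    hf.aestronglyMeasurable) (Eventually.of_forall fun z => ?_)
  simp only [Pi.add_apply, norm_mul, norm_pow, Real.norm_eq_abs]
  nlinarith [abs_pow_le_one_add_abs_pow z hkn, abs_nonneg (f z)]

lemma abs_pow_mul_abs_le (z s : ℝ) {k : ℕ} (hk : k ≤ 3) :
    |z| ^ k * |s| ≤ (1 + z ^ 2) * s ^ 2 + (1 + z ^ 4) := by
  have hsq : (|z| ^ k) ^ 2 ≤ (1 + z ^ 2) * (1 + z ^ 4) := by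
    have h6 := abs_pow_le_one_add_abs_pow z (show k * 2 ≤ 6 by omega)
    rw [pow_mul, (by decide : Even 6).pow_abs] at h6
    nlinarith [sq_nonneg z, sq_nonneg (z ^ 2)]
  -- the quadratic `(1 + z²) t² - |z|ᵏ t + (1 + z⁴)` in `t = |s|` has nonpositive discriminant
  have hA : 0 < 1 + z ^ 2 := by positivity
  rw [← sq_abs s]
  nlinarith [sq_nonneg (2 * (1 + z ^ 2) * |s| - |z| ^ k)]

lemma integrable_pow_mul_of_integrable_fisher {f f' : ℝ → ℝ} (hpos : ∀ z, 0 < f z)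
    (hf' : Measurable f') (hf : Integrable f) (hf4 : Integrable (fun z => z ^ 4 * f z))
    (hFisher : Integrable (fun z => (1 + z ^ 2) * (f' z / f z) ^ 2 * f z))
    {k : ℕ} (hk : k ≤ 3) : Integrable (fun z => z ^ k * f' z) := by
  refine (hFisher.add (hf.add hf4)).mono' ((continuous_pow k).aestronglyMeasurable.mul
    hf'.aestronglyMeasurable) (Eventually.of_forall fun z => ?_)
  calc ‖z ^ k * f' z‖ = |z| ^ k * |f' z / f z| * f z := by
        rw [abs_div, abs_of_pos (hpos z), norm_mul, norm_pow, Real.norm_eq_abs, Real.norm_eq_abs]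
        field_simp [(hpos z).ne']
    _ ≤ ((1 + z ^ 2) * (f' z / f z) ^ 2 + (1 + z ^ 4)) * f z :=
        mul_le_mul_of_nonneg_right (abs_pow_mul_abs_le z _ hk) (hpos z).le
    _ = _ := by simp only [Pi.add_apply]; ring

lemma Real.volume_eq_top_of_mem_atTop {s : Set ℝ} (hs : s ∈ atTop) : volume s = ⊤ := by
  obtain ⟨b, hb⟩ := mem_atTop_sets.1 hs
  exact top_le_iff.1 (Real.volume_Ici (a := b) ▸ measure_mono hb)

lemma Real.volume_eq_top_of_mem_atBot {s : Set ℝ} (hs : s ∈ atBot) : volume s = ⊤ := by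
  obtain ⟨b, hb⟩ := mem_atBot_sets.1 hs
  exact top_le_iff.1 (Real.volume_Iic (a := b) ▸ measure_mono hb)

-- `H` converges at `±∞` because `G` is integrable, and the limits vanish because `H` is integrable.
lemma integral_eq_zero_of_intervalIntegral_eq_sub {G H : ℝ → ℝ} (hG : Integrable G)
    (hH : Integrable H) (hGH : ∀ a b, ∫ t in a..b, G t = H b - H a) : ∫ t, G t = 0 := by
  have htop : Tendsto H atTop (𝓝 (H 0 + ∫ t in Ioi 0, G t)) :=
    ((intervalIntegral_tendsto_integral_Ioi 0 hG.integrableOn tendsto_id).const_add (H 0)).congr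
      fun b => by simp [hGH]
  have hbot : Tendsto H atBot (𝓝 (H 0 - ∫ t in Iic 0, G t)) :=
    ((intervalIntegral_tendsto_integral_Iic 0 hG.integrableOn tendsto_id).const_sub (H 0)).congr
      fun a => by simp [hGH]
  have h₁ := (hH.integrableAtFilter atTop).eq_zero_of_tendsto
    (fun _ => Real.volume_eq_top_of_mem_atTop) htop
  have h₂ := (hH.integrableAtFilter atBot).eq_zero_of_tendsto
    (fun _ => Real.volume_eq_top_of_mem_atBot) hbot
  rw [← intervalIntegral.integral_Iic_add_Ioi hG.integrableOn hG.integrableOn]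
  linarith

section AbsolutelyContinuous

variable {f f' : ℝ → ℝ}

lemma eq_add_intervalIntegral_of_sub_eq
    (hFTC : ∀ x y : ℝ, x ≤ y → f y - f x = ∫ v in x..y, f' v) (a x : ℝ) :
    f x = f a + ∫ v in a..x, f' v := by
  rcases le_total a x with h | h
  · linarith [hFTC a x h]
  · rw [integral_symm]
    linarith [hFTC x a h]

lemma ae_hasDerivAt_of_sub_eq_intervalIntegral (hf' : LocallyIntegrable f')
    (hFTC : ∀ x y : ℝ, x ≤ y → f y - f x = ∫ v in x..y, f' v) :
    ∀ᵐ x, HasDerivAt f (f' x) x := by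
  filter_upwards [LocallyIntegrable.ae_hasDerivAt_integral hf'] with x hx
  rw [funext (eq_add_intervalIntegral_of_sub_eq hFTC 0)]
  exact (hx 0).const_add _

lemma absolutelyContinuousOnInterval_of_sub_eq_intervalIntegral (hf' : LocallyIntegrable f')
    (hFTC : ∀ x y : ℝ, x ≤ y → f y - f x = ∫ v in x..y, f' v) (a b : ℝ) :
    AbsolutelyContinuousOnInterval f a b := by
  rw [funext (eq_add_intervalIntegral_of_sub_eq hFTC a)]
  exact contDiffOn_const.absolutelyContinuousOnInterval.add
    ((intervalIntegrable_iff.2 ((hf'.integrableOn_isCompact isCompact_uIcc).mono_set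
      uIoc_subset_uIcc)).absolutelyContinuousOnInterval_intervalIntegral left_mem_uIcc)

lemma intervalIntegral_deriv_mul_add_mul_deriv_of_sub_eq (hf' : LocallyIntegrable f')
    (hFTC : ∀ x y : ℝ, x ≤ y → f y - f x = ∫ v in x..y, f' v) {g : ℝ → ℝ} (hg : ContDiff ℝ 1 g)
    (a b : ℝ) : ∫ x in a..b, deriv g x * f x + g x * f' x = g b * f b - g a * f a := by
  rw [← hg.contDiffOn.absolutelyContinuousOnInterval.integral_deriv_mul_eq_sub
    (absolutelyContinuousOnInterval_of_sub_eq_intervalIntegral hf' hFTC a b)]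
  refine integral_congr_ae ?_
  filter_upwards [ae_hasDerivAt_of_sub_eq_intervalIntegral hf' hFTC] with x hx _
  rw [hx.deriv]

lemma integral_deriv_mul_add_integral_mul_deriv_of_sub_eq (hf' : LocallyIntegrable f')
    (hFTC : ∀ x y : ℝ, x ≤ y → f y - f x = ∫ v in x..y, f' v) {g : ℝ → ℝ} (hg : ContDiff ℝ 1 g)
    (hg'f : Integrable (fun x => deriv g x * f x)) (hgf' : Integrable (fun x => g x * f' x))
    (hgf : Integrable (fun x => g x * f x)) :
    (∫ x, deriv g x * f x) + ∫ x, g x * f' x = 0 := by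
  rw [← integral_add hg'f hgf']
  exact integral_eq_zero_of_intervalIntegral_eq_sub (hg'f.add hgf') hgf
    (intervalIntegral_deriv_mul_add_mul_deriv_of_sub_eq hf' hFTC hg)

lemma integral_pow_mul_deriv_of_sub_eq (hf' : LocallyIntegrable f')
    (hFTC : ∀ x y : ℝ, x ≤ y → f y - f x = ∫ v in x..y, f' v) (k : ℕ)
    (hk : Integrable (fun z => z ^ (k - 1) * f z)) (hk' : Integrable (fun z => z ^ k * f' z))
    (hkf : Integrable (fun z => z ^ k * f z)) :
    ∫ z, z ^ k * f' z = -(k * ∫ z, z ^ (k - 1) * f z) := by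
  have h := integral_deriv_mul_add_integral_mul_deriv_of_sub_eq hf' hFTC (contDiff_id.pow k)
    (by simpa [mul_assoc] using hk.const_mul (k : ℝ)) hk' hkf
  simp only [deriv_pow_field, id, mul_assoc, MeasureTheory.integral_const_mul] at h
  linarith

lemma integral_pow_mul_smul_score (hpos : ∀ z, 0 < f z) (hf' : LocallyIntegrable f')
    (hFTC : ∀ x y : ℝ, x ≤ y → f y - f x = ∫ v in x..y, f' v) {ℓ : ℝ → ℝ × ℝ}
    (hℓ : ∀ z, ℓ z = (-(f' z) / f z, -1 - z * f' z / f z)) (j : ℕ)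
    (hmom : ∀ i ≤ j + 1, Integrable (fun z => z ^ i * f z))
    (hmom' : ∀ i ≤ j + 1, Integrable (fun z => z ^ i * f' z)) :
    Integrable (fun z => (z ^ j * f z) • ℓ z) ∧
      ∫ z, (z ^ j * f z) • ℓ z = (j * ∫ z, z ^ (j - 1) * f z, j * ∫ z, z ^ j * f z) := by
  have hpt : ∀ z,
      (z ^ j * f z) • ℓ z = (-(z ^ j * f' z), -(z ^ j * f z + z ^ (j + 1) * f' z)) := by
    intro z
    rw [hℓ, Prod.smul_mk, smul_eq_mul, smul_eq_mul, Prod.mk.injEq]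
    constructor
    · field_simp [(hpos z).ne']
    · field_simp [(hpos z).ne']
      ring
  have h₁ : Integrable (fun z => -(z ^ j * f' z)) := (hmom' j (by omega)).neg
  have h₂ : Integrable (fun z => -(z ^ j * f z + z ^ (j + 1) * f' z)) :=
    ((hmom j (by omega)).add (hmom' (j + 1) le_rfl)).neg
  simp only [hpt]
  refine ⟨h₁.prodMk h₂, ?_⟩
  rw [integral_pair h₁ h₂, MeasureTheory.integral_neg, MeasureTheory.integral_neg,
    integral_add (hmom j (by omega)) (hmom' _ le_rfl),
    integral_pow_mul_deriv_of_sub_eq hf' hFTC j (hmom _ (by omega)) (hmom' j (by omega))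
      (hmom j (by omega)),
    integral_pow_mul_deriv_of_sub_eq hf' hFTC (j + 1) (by simpa using hmom j (by omega))
      (hmom' _ le_rfl) (hmom _ le_rfl)]
  simp only [Nat.add_sub_cancel, Nat.cast_add, Nat.cast_one, Prod.mk.injEq]
  constructor <;> ring

end AbsolutelyContinuous

lemma integral_pow_mul_smul_projection {E : Type*} [NormedAddCommGroup E] [NormedSpace ℝ E]
    [CompleteSpace E] {f : ℝ → ℝ} {ℓ ℓ₀ : ℝ → E} {c Δ : ℝ} {a b : E}
    (hℓ₀ : ∀ z, ℓ₀ z = ℓ z - z • a - ((z ^ 2 - c * z - 1) / Δ) • b) (j : ℕ)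
    (hℓ : Integrable (fun z => (z ^ j * f z) • ℓ z))
    (hmom : ∀ i ≤ j + 2, Integrable (fun z => z ^ i * f z)) :
    ∫ z, (z ^ j * f z) • ℓ₀ z = (∫ z, (z ^ j * f z) • ℓ z) - (∫ z, z ^ (j + 1) * f z) • a
      - (((∫ z, z ^ (j + 2) * f z) - c * (∫ z, z ^ (j + 1) * f z) - ∫ z, z ^ j * f z) / Δ) • b := by
  have hpt : ∀ z, (z ^ j * f z) • ℓ₀ z = (z ^ j * f z) • ℓ z - (z ^ (j + 1) * f z) • a
      - ((z ^ (j + 2) * f z - c * (z ^ (j + 1) * f z) - z ^ j * f z) / Δ) • b := by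
    intro z
    rw [hℓ₀]
    module
  have h₀ := hmom j (by omega)
  have h₁ := hmom (j + 1) (by omega)
  have h₂ := hmom (j + 2) le_rfl
  have h₂₁ : Integrable (fun z => z ^ (j + 2) * f z - c * (z ^ (j + 1) * f z)) :=
    h₂.sub' (h₁.const_mul c)
  simp only [hpt]
  rw [integral_sub (hℓ.sub' (h₁.smul_const a)) ((h₂₁.sub' h₀).div_const Δ |>.smul_const b),
    integral_sub hℓ (h₁.smul_const a), _root_.integral_smul_const, _root_.integral_smul_const,
    MeasureTheory.integral_div,
    integral_sub h₂₁ h₀, integral_sub h₂ (h₁.const_mul c), MeasureTheory.integral_const_mul]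

theorem score_projection_mem_tangent_set_general
    (f f' : ℝ → ℝ)
    (hpos : ∀ z, 0 < f z) (hf' : Measurable f')
    (hint : Integrable f) (hdens : ∫ z, f z = 1)
    (hFTC : ∀ x y : ℝ, x ≤ y → f y - f x = ∫ v in x..y, f' v)
    (hFisher : Integrable (fun z => (1 + z ^ 2) * (f' z / f z) ^ 2 * f z))
    (hmean : ∫ z, z * f z = 0) (hvar : ∫ z, z ^ 2 * f z = 1)
    (hmom4 : Integrable (fun z => z ^ 4 * f z))
    (μ₃ Δ : ℝ) (hμ₃ : μ₃ = ∫ z, z ^ 3 * f z)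
    (hΔ : Δ = (∫ z, z ^ 4 * f z) - μ₃ ^ 2 - 1) (hΔpos : 0 < Δ)
    (ℓ ℓ₀ : ℝ → ℝ × ℝ)
    (hℓ : ∀ z, ℓ z = (-(f' z) / f z, -1 - z * f' z / f z))
    (hℓ₀ : ∀ z, ℓ₀ z = ℓ z - z • ((1 : ℝ), (0 : ℝ))
      - ((z ^ 2 - μ₃ * z - 1) / Δ) • ((2 : ℝ) • ((0 : ℝ), (1 : ℝ)) - μ₃ • ((1 : ℝ), (0 : ℝ)))) :
    (∫ z, f z • ℓ₀ z = 0) ∧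
    (∫ z, (z * f z) • ℓ₀ z = 0) ∧
    (∫ z, (z ^ 2 * f z) • ℓ₀ z = 0) := by
  have hmom : ∀ i ≤ 4, Integrable (fun z => z ^ i * f z) := fun i hi =>
    hint.pow_mul_of_le hmom4 hi
  have hmom' : ∀ i ≤ 3, Integrable (fun z => z ^ i * f' z) := fun i hi =>
    integrable_pow_mul_of_integrable_fisher hpos hf' hint hmom4 hFisher hi
  have hloc : LocallyIntegrable f' := by simpa using (hmom' 0 (by norm_num)).locallyIntegrable
  have key : ∀ j : ℕ, j ≤ 2 → ∫ z, (z ^ j * f z) • ℓ₀ z =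
      ((j : ℝ) * ∫ z, z ^ (j - 1) * f z, (j : ℝ) * ∫ z, z ^ j * f z)
        - (∫ z, z ^ (j + 1) * f z) • ((1 : ℝ), (0 : ℝ))
        - (((∫ z, z ^ (j + 2) * f z) - μ₃ * (∫ z, z ^ (j + 1) * f z) - ∫ z, z ^ j * f z) / Δ)
          • ((2 : ℝ) • ((0 : ℝ), (1 : ℝ)) - μ₃ • ((1 : ℝ), (0 : ℝ))) := by
    intro j hj
    obtain ⟨hscore_int, hscore⟩ := integral_pow_mul_smul_score hpos hloc hFTC hℓ j
      (fun i hi => hmom i (by omega)) (fun i hi => hmom' i (by omega))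
    rw [integral_pow_mul_smul_projection hℓ₀ j hscore_int (fun i hi => hmom i (by omega)), hscore]
  have hm4 : ∫ z, z ^ 4 * f z = Δ + μ₃ ^ 2 + 1 := by linarith
  refine ⟨?_, ?_, ?_⟩
  · simpa [hdens, hmean, hvar, Prod.mk_zero_zero] using key 0 (by norm_num)
  · simpa [hdens, hmean, hvar, ← hμ₃] using key 1 (by norm_num)
  · rw [key 2 (by norm_num)]
    ext <;> simp [hmean, hvar, ← hμ₃, hm4] <;> field_simp <;> ring

/-- For a positive, absolutely continuous probability density `f` with finite Fisher
information for location and scale, and error density moments `E[e] = 0`, `E[e²] = 1`,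
`E[e⁴] < ∞`, `Δ = E[e⁴] − μ₃² − 1 > 0`, the function
`ℓ₀(z) = ℓ(z) − z e₁ − ((z² − μ₃ z − 1)/Δ)(2 e₂ − μ₃ e₁)` built from the score vector
`ℓ(z) = (−f′(z)/f(z), −1 − z f′(z)/f(z))` satisfies `E[ℓ₀(e)] = 0`, `E[e ℓ₀(e)] = 0` and
`E[e² ℓ₀(e)] = 0` componentwise in `ℝ²`. -/
theorem score_projection_mem_tangent_set
    (f f' : ℝ → ℝ)
    (hpos : ∀ z, 0 < f z) (hf : Measurable f) (hf' : Measurable f')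
    (hint : Integrable f) (hdens : ∫ z, f z = 1)
    (hFTC : ∀ x y : ℝ, x ≤ y → f y - f x = ∫ v in x..y, f' v)
    (hFisher : Integrable (fun z => (1 + z ^ 2) * (f' z / f z) ^ 2 * f z))
    (hmean : ∫ z, z * f z = 0) (hvar : ∫ z, z ^ 2 * f z = 1)
    (hmom4 : Integrable (fun z => z ^ 4 * f z))
    (μ₃ Δ : ℝ) (hμ₃ : μ₃ = ∫ z, z ^ 3 * f z)
    (hΔ : Δ = (∫ z, z ^ 4 * f z) - μ₃ ^ 2 - 1) (hΔpos : 0 < Δ)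
    (ℓ ℓ₀ : ℝ → ℝ × ℝ)
    (hℓ : ∀ z, ℓ z = (-(f' z) / f z, -1 - z * f' z / f z))
    (hℓ₀ : ∀ z, ℓ₀ z = ℓ z - z • ((1 : ℝ), (0 : ℝ))
      - ((z ^ 2 - μ₃ * z - 1) / Δ) • ((2 : ℝ) • ((0 : ℝ), (1 : ℝ)) - μ₃ • ((1 : ℝ), (0 : ℝ)))) :
    (∫ z, f z • ℓ₀ z = 0) ∧
    (∫ z, (z * f z) • ℓ₀ z = 0) ∧
    (∫ z, (z ^ 2 * f z) • ℓ₀ z = 0) :=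
  score_projection_mem_tangent_set_general f f' hpos hf' hint hdens hFTC hFisher hmean hvar hmom4 μ₃
    Δ hμ₃ hΔ hΔpos ℓ ℓ₀ hℓ hℓ₀
end

section
/- Let f : ℝ → [0,∞) be a positive probability density, absolutely continuous with almost-everywhere derivative f′, such that I := ∫ (1 + v²)(f′(v)/f(v))² f(v) dv < ∞ and M := sup_{v ∈ ℝ} |v f(v)| < ∞. Then for all real x ≤ y: |(1 + y²) f(y) − (1 + x²) f(x)| ≤ I^{1/2} · (∫ₓ^y (1 + v²) f(v) dv)^{1/2} + 2M(y − x). -/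
open MeasureTheory intervalIntegral

/-!
Since `f` is the indefinite integral of `f′`, it is absolutely continuous, and integration by
parts against `1 + v²` gives
`(1 + y²) f(y) − (1 + x²) f(x) = ∫ₓ^y (1 + v²) f′(v) dv + ∫ₓ^y 2v f(v) dv`.
Writing `(1 + v²) |f′| = √((1 + v²) (f′/f)² f) · √((1 + v²) f)`, Cauchy–Schwarz bounds the first
integral by `√I · (∫ₓ^y (1 + v²) f)^{1/2}`; the second is at most `2M (y − x)`.
-/

open Set Filter

section CauchySchwarz

variable {α : Type*} [MeasurableSpace α] {μ : Measure α} {u w t d : α → ℝ}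

theorem memLp_two_sqrt (hu : Integrable u μ) (hu0 : 0 ≤ᵐ[μ] u) :
    MemLp (fun a => √(u a)) 2 μ := by
  refine (memLp_two_iff_integrable_sq
    (Real.continuous_sqrt.comp_aestronglyMeasurable hu.1)).2 (hu.congr ?_)
  filter_upwards [hu0] with a ha using (Real.sq_sqrt ha).symm

theorem integral_sqrt_mul_sqrt_le (hu : Integrable u μ) (hw : Integrable w μ)
    (hu0 : 0 ≤ᵐ[μ] u) (hw0 : 0 ≤ᵐ[μ] w) :
    ∫ a, √(u a) * √(w a) ∂μ ≤ √(∫ a, u a ∂μ) * √(∫ a, w a ∂μ) := by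
  have hsq : ∀ {v : α → ℝ}, 0 ≤ᵐ[μ] v → ∫ a, √(v a) ^ (2 : ℝ) ∂μ = ∫ a, v a ∂μ := fun hv0 =>
    integral_congr_ae (by filter_upwards [hv0] with a ha; simp [Real.sq_sqrt ha])
  have := integral_mul_le_Lp_mul_Lq_of_nonneg Real.HolderConjugate.two_two
    (.of_forall fun a => Real.sqrt_nonneg (u a)) (.of_forall fun a => Real.sqrt_nonneg (w a))
    (by simpa using memLp_two_sqrt hu hu0) (by simpa using memLp_two_sqrt hw hw0)
  rwa [hsq hu0, hsq hw0, ← Real.sqrt_eq_rpow, ← Real.sqrt_eq_rpow] at this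

theorem sqrt_mul_div_sq_mul_mul_sqrt_mul {w t d : ℝ} (hw : 0 ≤ w) (ht : 0 < t) :
    √(w * (d / t) ^ 2 * t) * √(w * t) = |w * d| := by
  rw [← Real.sqrt_mul (by positivity), ← Real.sqrt_sq_eq_abs]
  congr 1
  field_simp

/- In the application `w = 1 + v²`, `t = f` and `d = f′`, so `d / t` is the score `f′ / f`. -/

theorem integrable_mul_of_weighted_score (hw : ∀ a, 0 ≤ w a) (ht : ∀ a, 0 < t a)
    (hd : AEStronglyMeasurable (fun a => w a * d a) μ)
    (hI : Integrable (fun a => w a * (d a / t a) ^ 2 * t a) μ)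
    (hG : Integrable (fun a => w a * t a) μ) :
    Integrable (fun a => w a * d a) μ := by
  refine ((memLp_two_sqrt hI (.of_forall fun a => by have := ht a; have := hw a; positivity)
    ).integrable_mul (memLp_two_sqrt hG (.of_forall fun a => mul_nonneg (hw a) (ht a).le))).mono'
    hd (.of_forall fun a => ?_)
  simp [sqrt_mul_div_sq_mul_mul_sqrt_mul (hw a) (ht a)]

theorem abs_integral_mul_le_of_weighted_score (hw : ∀ a, 0 ≤ w a) (ht : ∀ a, 0 < t a)
    (hI : Integrable (fun a => w a * (d a / t a) ^ 2 * t a) μ)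
    (hG : Integrable (fun a => w a * t a) μ) :
    |∫ a, w a * d a ∂μ| ≤ √(∫ a, w a * (d a / t a) ^ 2 * t a ∂μ) * √(∫ a, w a * t a ∂μ) :=
  calc |∫ a, w a * d a ∂μ| ≤ ∫ a, |w a * d a| ∂μ := abs_integral_le_integral_abs
    _ = ∫ a, √(w a * (d a / t a) ^ 2 * t a) * √(w a * t a) ∂μ := by
      simp only [sqrt_mul_div_sq_mul_mul_sqrt_mul (hw _) (ht _)]
    _ ≤ _ := integral_sqrt_mul_sqrt_le hI hG
      (.of_forall fun a => by have := ht a; have := hw a; positivity)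
      (.of_forall fun a => mul_nonneg (hw a) (ht a).le)

end CauchySchwarz

theorem AbsolutelyContinuousOnInterval.congr {X : Type*} [PseudoMetricSpace X] {f g : ℝ → X}
    {a b : ℝ} (hf : AbsolutelyContinuousOnInterval f a b) (hfg : EqOn f g (uIcc a b)) :
    AbsolutelyContinuousOnInterval g a b := by
  refine Tendsto.congr' ?_ hf
  filter_upwards [eventually_inf_principal.2 (.of_forall fun E (hE : E ∈ _) => hE)]
    with E ⟨hE, _⟩
  refine Finset.sum_congr rfl fun i hi => ?_
  rw [hfg (hE i hi).1, hfg (hE i hi).2]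

theorem IntervalIntegrable.of_continuous_mul {g φ : ℝ → ℝ} {a b : ℝ}
    (h : IntervalIntegrable (fun v => g v * φ v) volume a b) (hg : Continuous g)
    (hg0 : ∀ v, g v ≠ 0) : IntervalIntegrable φ volume a b := by
  have hφ : φ = fun v => (g v)⁻¹ * (g v * φ v) := by
    ext v
    field_simp [hg0 v]
  rw [hφ]
  exact h.continuousOn_mul (hg.inv₀ hg0).continuousOn

section IndefiniteIntegral

variable {f f' : ℝ → ℝ} {a b : ℝ}

theorem absolutelyContinuousOnInterval_of_sub_eq_integral (hab : a ≤ b)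
    (hf' : IntervalIntegrable f' volume a b)
    (hf : ∀ v ∈ Icc a b, f v - f a = ∫ u in a..v, f' u) :
    AbsolutelyContinuousOnInterval f a b := by
  refine ((contDiffOn_const (c := f a)).absolutelyContinuousOnInterval.add
    (hf'.absolutelyContinuousOnInterval_intervalIntegral left_mem_uIcc)).congr fun v hv => ?_
  rw [uIcc_of_le hab] at hv
  simp [← hf v hv]

theorem ae_deriv_eq_of_sub_eq_integral (hab : a ≤ b)
    (hf' : IntervalIntegrable f' volume a b)
    (hf : ∀ v ∈ Icc a b, f v - f a = ∫ u in a..v, f' u) :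
    ∀ᵐ v, v ∈ uIoc a b → deriv f v = f' v := by
  filter_upwards [hf'.ae_hasDerivAt_integral, volume.ae_ne b] with v hv hvb hvab
  rw [uIoc_of_le hab] at hvab
  rw [uIcc_of_le hab] at hv
  have hnhds : f =ᶠ[nhds v] fun u => f a + ∫ t in a..u, f' t := by
    filter_upwards [Ioo_mem_nhds hvab.1 (lt_of_le_of_ne hvab.2 hvb)] with u hu
    rw [← hf u (Ioo_subset_Icc_self hu), add_sub_cancel]
  rw [hnhds.deriv_eq]
  exact ((hv (Ioc_subset_Icc_self hvab) a (left_mem_Icc.2 hab)).const_add (f a)).deriv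

theorem integral_mul_add_mul_deriv_eq_sub_of_sub_eq_integral {g : ℝ → ℝ} (hab : a ≤ b)
    (hf' : IntervalIntegrable f' volume a b)
    (hf : ∀ v ∈ Icc a b, f v - f a = ∫ u in a..v, f' u) (hg : ContDiffOn ℝ 1 g (uIcc a b)) :
    ∫ v in a..b, f' v * g v + f v * deriv g v = f b * g b - f a * g a := by
  rw [← (absolutelyContinuousOnInterval_of_sub_eq_integral hab hf' hf).integral_deriv_mul_eq_sub
    hg.absolutelyContinuousOnInterval]
  refine integral_congr_ae ?_
  filter_upwards [ae_deriv_eq_of_sub_eq_integral hab hf' hf] with v hv hvab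
  rw [hv hvab]

end IndefiniteIntegral

section WeightedDensity

variable {f f' : ℝ → ℝ} {x y : ℝ}

theorem one_add_sq_mul_sub_one_add_sq_mul_eq (hxy : x ≤ y)
    (hf' : IntervalIntegrable f' volume x y)
    (hf : ∀ v ∈ Icc x y, f v - f x = ∫ u in x..v, f' u)
    (hvf : IntervalIntegrable (fun v => 2 * v * f v) volume x y) :
    (1 + y ^ 2) * f y - (1 + x ^ 2) * f x
      = (∫ v in x..y, (1 + v ^ 2) * f' v) + ∫ v in x..y, 2 * v * f v := by
  have hderiv : deriv (fun v : ℝ => 1 + v ^ 2) = fun v => 2 * v := by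
    ext v
    simp
  have key := integral_mul_add_mul_deriv_eq_sub_of_sub_eq_integral hxy hf' hf
    (g := fun v => 1 + v ^ 2) (by fun_prop)
  rw [hderiv] at key
  rw [← integral_add (hf'.continuousOn_mul (by fun_prop)) hvf]
  convert key.symm using 1
  · ring
  · congr 1
    ext v
    ring

theorem abs_integral_one_add_sq_mul_le (hxy : x ≤ y) (hpos : ∀ v, 0 < f v)
    (hFisher : Integrable (fun v => (1 + v ^ 2) * (f' v / f v) ^ 2 * f v))
    (hG : IntegrableOn (fun v => (1 + v ^ 2) * f v) (Ioc x y)) :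
    |∫ v in x..y, (1 + v ^ 2) * f' v|
      ≤ √(∫ v, (1 + v ^ 2) * (f' v / f v) ^ 2 * f v) * √(∫ v in x..y, (1 + v ^ 2) * f v) := by
  rw [integral_of_le hxy, integral_of_le hxy]
  refine (abs_integral_mul_le_of_weighted_score (fun v => by positivity) hpos
    hFisher.integrableOn hG).trans ?_
  gcongr ?_ * _
  exact Real.sqrt_le_sqrt <|
    setIntegral_le_integral hFisher (.of_forall fun v => by have := hpos v; positivity)

theorem abs_integral_two_mul_mul_le {M : ℝ} (hM : ∀ v, |v * f v| ≤ M) (hxy : x ≤ y) :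
    |∫ v in x..y, 2 * v * f v| ≤ 2 * M * (y - x) := by
  have := norm_integral_le_of_norm_le_const (a := x) (b := y) (C := 2 * M)
    (f := fun v => 2 * v * f v) fun v _ => by
      rw [Real.norm_eq_abs, mul_assoc, abs_mul, abs_two]
      linarith [hM v]
  rwa [Real.norm_eq_abs, abs_of_nonneg (sub_nonneg.2 hxy)] at this

end WeightedDensity

theorem weighted_density_increment_bound_general
    (f f' : ℝ → ℝ)
    (hpos : ∀ z, 0 < f z) (hf' : Measurable f')
    (hint : Integrable f)
    (hFTC : ∀ x y : ℝ, x ≤ y → f y - f x = ∫ v in x..y, f' v)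
    (I : ℝ) (hI : I = ∫ v, (1 + v ^ 2) * (f' v / f v) ^ 2 * f v)
    (hFisher : Integrable (fun v => (1 + v ^ 2) * (f' v / f v) ^ 2 * f v))
    (M : ℝ) (hM : ∀ v, |v * f v| ≤ M) :
    ∀ x y : ℝ, x ≤ y →
      |(1 + y ^ 2) * f y - (1 + x ^ 2) * f x|
        ≤ Real.sqrt I * Real.sqrt (∫ v in x..y, (1 + v ^ 2) * f v) + 2 * M * (y - x) := by
  intro x y hxy
  have hw : ∀ v : ℝ, 0 < 1 + v ^ 2 := fun v => by positivity
  have hG : IntegrableOn (fun v => (1 + v ^ 2) * f v) (Ioc x y) :=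
    (hint.intervalIntegrable.continuousOn_mul (by fun_prop)).1
  have hA : IntervalIntegrable (fun v => (1 + v ^ 2) * f' v) volume x y :=
    (intervalIntegrable_iff_integrableOn_Ioc_of_le hxy).2 <| integrable_mul_of_weighted_score
      (fun v => (hw v).le) hpos (by fun_prop) hFisher.integrableOn hG
  have hf'int : IntervalIntegrable f' volume x y :=
    hA.of_continuous_mul (by fun_prop) fun v => (hw v).ne'
  rw [one_add_sq_mul_sub_one_add_sq_mul_eq hxy hf'int (fun v hv => hFTC x v hv.1)
    (hint.intervalIntegrable.continuousOn_mul (by fun_prop)), hI]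
  exact (abs_add_le _ _).trans <| add_le_add (abs_integral_one_add_sq_mul_le hxy hpos hFisher hG)
    (abs_integral_two_mul_mul_le hM hxy)

/-- For a positive, absolutely continuous probability density `f` (a.e. derivative `f′`,
encoded via the fundamental theorem of calculus) with finite Fisher information
`I = ∫ (1 + v²)(f′(v)/f(v))² f(v) dv` and `M ≥ sup_v |v f(v)|`, one has, for all `x ≤ y`:
`|(1 + y²) f(y) − (1 + x²) f(x)| ≤ √I ⬝ (∫ₓ^y (1 + v²) f(v) dv)^{1/2} + 2 M (y − x)`. -/
theorem weighted_density_increment_bound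
    (f f' : ℝ → ℝ)
    (hpos : ∀ z, 0 < f z) (hf : Measurable f) (hf' : Measurable f')
    (hint : Integrable f) (hdens : ∫ z, f z = 1)
    (hFTC : ∀ x y : ℝ, x ≤ y → f y - f x = ∫ v in x..y, f' v)
    (I : ℝ) (hI : I = ∫ v, (1 + v ^ 2) * (f' v / f v) ^ 2 * f v)
    (hFisher : Integrable (fun v => (1 + v ^ 2) * (f' v / f v) ^ 2 * f v))
    (M : ℝ) (hM : ∀ v, |v * f v| ≤ M) :
    ∀ x y : ℝ, x ≤ y →
      |(1 + y ^ 2) * f y - (1 + x ^ 2) * f x|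
        ≤ Real.sqrt I * Real.sqrt (∫ v in x..y, (1 + v ^ 2) * f v) + 2 * M * (y - x) :=
  weighted_density_increment_bound_general f f' hpos hf' hint hFTC I hI hFisher M hM
end

section
/- Let e be a real random variable with distribution μ admitting density f with respect to Lebesgue measure, and let h, s : ℝ → ℝ be measurable with ∫ h² dμ < ∞ and ∫ s² dμ < ∞, where s satisfies ∫ s dμ = 0, ∫ z s(z) μ(dz) = 0 and ∫ z² s(z) μ(dz) = 0. Suppose also E[e] = 0, E[e²] = 1, E[e⁴] < ∞ and Δ := E[e⁴] − (E[e³])² − 1 ≠ 0, and let h₀ be defined by h₀(z) = h(z) − E[h(e)] − z E[e h(e)] − ((z² − μ₃ z − 1)/Δ)(E[e² h(e)] − μ₃ E[e h(e)] − E[h(e)]) with μ₃ = E[e³]. Define the perturbed densities f_{ns}(z) = f(z)(1 + n^{−1/2} s(z)). Then lim_{n → ∞} n^{1/2} [∫ h(z) f_{ns}(z) dz − ∫ h(z) f(z) dz] = E[h(e) s(e)] = E[h₀(e) s(e)]. -/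
open MeasureTheory Filter

lemma aux_int {p q f : ℝ → ℝ} (hp : Measurable p) (hq : Measurable q) (hf : Measurable f)
    (hfpos : ∀ z, 0 ≤ f z)
    (hp2 : Integrable (fun z => (p z) ^ 2 * f z)) (hq2 : Integrable (fun z => (q z) ^ 2 * f z)) :
    Integrable (fun z => p z * q z * f z) := by
  have hb : Integrable (fun z => ((p z) ^ 2 * f z + (q z) ^ 2 * f z) / 2) :=
    (hp2.add hq2).div_const 2
  refine hb.mono' ((hp.mul hq).mul hf).aestronglyMeasurable ?_
  filter_upwards with z
  have h1 : |p z * q z| ≤ ((p z) ^ 2 + (q z) ^ 2) / 2 := by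
    rw [abs_mul]
    nlinarith [sq_abs (p z), sq_abs (q z), sq_nonneg (|p z| - |q z|)]
  rw [Real.norm_eq_abs, abs_mul, abs_of_nonneg (hfpos z)]
  calc |p z * q z| * f z ≤ ((p z) ^ 2 + (q z) ^ 2) / 2 * f z :=
        mul_le_mul_of_nonneg_right h1 (hfpos z)
    _ = ((p z) ^ 2 * f z + (q z) ^ 2 * f z) / 2 := by ring

/-- Let `e` have density `f`, with `E[e] = 0`, `E[e²] = 1`, `E[e⁴] < ∞` and
`Δ = E[e⁴] − μ₃² − 1 ≠ 0`; let `h, s ∈ L₂(F)` with `∫ s f = 0`, `∫ z s f = 0`, `∫ z² s f = 0`,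
and let `h₀` be the projection of `h` onto the tangent set. For the perturbed densities
`f_{ns}(z) = f(z)(1 + n^{−1/2} s(z))` one has
`lim_n n^{1/2} [∫ h f_{ns} − ∫ h f] = E[h(e) s(e)] = E[h₀(e) s(e)]`. -/
theorem directional_derivative_of_linear_functional
    (f : ℝ → ℝ) (hf : Measurable f) (hfpos : ∀ z, 0 ≤ f z)
    (hdens : ∫ z, f z = 1)
    (hmean : ∫ z, z * f z = 0) (hvar : ∫ z, z ^ 2 * f z = 1)
    (hmom4 : Integrable (fun z => z ^ 4 * f z))
    (μ₃ Δ : ℝ) (hμ₃ : μ₃ = ∫ z, z ^ 3 * f z)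
    (hΔ : Δ = (∫ z, z ^ 4 * f z) - μ₃ ^ 2 - 1) (hΔ0 : Δ ≠ 0)
    (h s : ℝ → ℝ) (hh : Measurable h) (hs : Measurable s)
    (hh2 : Integrable (fun z => (h z) ^ 2 * f z))
    (hs2 : Integrable (fun z => (s z) ^ 2 * f z))
    (hs0 : ∫ z, s z * f z = 0) (hs1 : ∫ z, z * s z * f z = 0)
    (hs2' : ∫ z, z ^ 2 * s z * f z = 0)
    (h₀ : ℝ → ℝ)
    (hh₀ : ∀ z, h₀ z = h z - (∫ u, h u * f u) - z * (∫ u, u * h u * f u)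
      - ((z ^ 2 - μ₃ * z - 1) / Δ) *
        ((∫ u, u ^ 2 * h u * f u) - μ₃ * (∫ u, u * h u * f u) - (∫ u, h u * f u))) :
    Tendsto
      (fun n : ℕ => Real.sqrt n *
        ((∫ z, h z * (f z * (1 + (Real.sqrt n)⁻¹ * s z))) - ∫ z, h z * f z))
      atTop (nhds (∫ z, h z * s z * f z)) ∧
    (∫ z, h z * s z * f z) = ∫ z, h₀ z * s z * f z := by
  -- basic integrabilities
  have f_int : Integrable f := by
    by_contra hc
    rw [integral_undef hc] at hdens; exact one_ne_zero hdens.symm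
  have sq_int : Integrable (fun z => z ^ 2 * f z) := by
    by_contra hc
    rw [integral_undef hc] at hvar; exact one_ne_zero hvar.symm
  have one2 : Integrable (fun z => (1 : ℝ) ^ 2 * f z) := by simpa using f_int
  have id2 : Integrable (fun z => (id z : ℝ) ^ 2 * f z) := by simpa using sq_int
  have sq2 : Integrable (fun z => ((fun z : ℝ => z ^ 2) z) ^ 2 * f z) := by
    simpa [← pow_mul] using hmom4
  have A : Integrable (fun z => h z * f z) := by
    have := aux_int hh measurable_const hf hfpos hh2 one2
    simpa using this
  have B : Integrable (fun z => h z * s z * f z) := aux_int hh hs hf hfpos hh2 hs2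
  have C : Integrable (fun z => s z * f z) := by
    have := aux_int hs measurable_const hf hfpos hs2 one2
    simpa using this
  have D : Integrable (fun z => z * s z * f z) := by
    have := aux_int measurable_id hs hf hfpos id2 hs2
    simpa using this
  have E : Integrable (fun z => z ^ 2 * s z * f z) := by
    have := aux_int (measurable_id.pow_const 2) hs hf hfpos sq2 hs2
    simpa using this
  set I := ∫ z, h z * s z * f z with hI
  have split : ∀ c : ℝ, (∫ z, h z * (f z * (1 + c * s z)))
      = (∫ z, h z * f z) + c * I := by
    intro c
    have e : (fun z => h z * (f z * (1 + c * s z)))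
        = fun z => h z * f z + c * (h z * s z * f z) := funext fun z => by ring
    rw [e, integral_add A (B.const_mul c), integral_const_mul]
  constructor
  · refine Tendsto.congr' ?_ tendsto_const_nhds
    filter_upwards [eventually_ge_atTop 1] with n hn
    have hpos : (0 : ℝ) < Real.sqrt n := Real.sqrt_pos.mpr (by exact_mod_cast hn)
    rw [split]
    field_simp
    ring
  · set a := ∫ u, h u * f u
    set b := ∫ u, u * h u * f u
    set K := (∫ u, u ^ 2 * h u * f u) - μ₃ * b - a
    have e1 : (fun z => h₀ z * s z * f z)
        = fun z => h z * s z * f z +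
          (((K / Δ) - a) * (s z * f z) +
            (((K * μ₃ / Δ) - b) * (z * s z * f z) +
              (-(K / Δ)) * (z ^ 2 * s z * f z))) := funext fun z => by
      rw [hh₀ z]; field_simp; ring
    have C' : Integrable (fun z => ((K / Δ) - a) * (s z * f z)) := C.const_mul _
    have D' : Integrable (fun z => ((K * μ₃ / Δ) - b) * (z * s z * f z)) := D.const_mul _
    have E' : Integrable (fun z => (-(K / Δ)) * (z ^ 2 * s z * f z)) := E.const_mul _
    have S2 : Integrable (fun z => ((K * μ₃ / Δ) - b) * (z * s z * f z)
        + (-(K / Δ)) * (z ^ 2 * s z * f z)) := D'.add E'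
    have S1 : Integrable (fun z => ((K / Δ) - a) * (s z * f z)
        + (((K * μ₃ / Δ) - b) * (z * s z * f z) + (-(K / Δ)) * (z ^ 2 * s z * f z))) := C'.add S2
    rw [e1, integral_add B S1, integral_add C' S2, integral_add D' E',
      integral_const_mul, integral_const_mul, integral_const_mul, hs0, hs1, hs2']
    ring
end
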